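/- arXiv:2206.03640 — 4 statements merged into one kernel-verified Lean document; each statement's English description precedes it below -/
import Mathlib

section
/- Let t0 ∈ ℝ, let c > 0, b > 0 with b < c, and let K ≥ 0. Let v : ℝ → ℝ be continuous on [t0, ∞) with v(t0) ≥ 0, and suppose that for every t ≥ t0 the upper right Dini derivative satisfies D⁺v(t) ≤ −c·v(t) + K·e^{−b(t−t0)}. Then for every t ≥ t0, v(t) ≤ e^{−b(t−t0)}·(v(t0) + K/(c−b)). -/
/-!
Compare `v` with the barrier `B t = exp (-b (t - t0)) * A` for any `A > v t0 + K / (c - b)`.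
At a point where `v` touches `B`, the Dini bound gives `D⁺v ≤ -c B + K e^{-b(t-t0)} < -b B = B'`
because `K < (c - b) A`, so `v` can never cross `B` (the fencing lemma
`image_le_of_liminf_slope_right_lt_deriv_boundary`). Letting `A` decrease gives the claim.
-/

/-- The upper right Dini derivative of `v` at `t`:
`D⁺v(t) = limsup_{h→0⁺} (v(t+h) − v(t))/h`, valued in `EReal`. -/
noncomputable def upperDini (v : ℝ → ℝ) (t : ℝ) : EReal :=
  Filter.limsup (fun h : ℝ => (((v (t + h) - v t) / h : ℝ) : EReal))
    (nhdsWithin 0 (Set.Ioi 0))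

open Set Filter Topology

theorem eventually_slope_lt_of_upperDini_lt {v : ℝ → ℝ} {x r : ℝ} (h : upperDini v x < r) :
    ∀ᶠ z in 𝓝[>] x, slope v x z < r := by
  have hmap : map (x + ·) (𝓝[>] 0) = 𝓝[>] x := by simp
  rw [← hmap, eventually_map]
  filter_upwards [eventually_lt_of_limsup_lt h] with h hh
  rw [slope_def_field, add_sub_cancel_left]
  exact_mod_cast hh

theorem le_of_upperDini_le_of_lt_deriv_boundary {f g B B' : ℝ → ℝ} {a b : ℝ}
    (hf : ContinuousOn f (Icc a b)) (hg : ∀ x ∈ Ico a b, upperDini f x ≤ g x)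
    (ha : f a ≤ B a) (hB : ∀ x, HasDerivAt B (B' x) x)
    (bound : ∀ x ∈ Ico a b, f x = B x → g x < B' x) : ∀ ⦃x⦄, x ∈ Icc a b → f x ≤ B x :=
  image_le_of_liminf_slope_right_lt_deriv_boundary hf
    (fun x hx _ hr => (eventually_slope_lt_of_upperDini_lt
      ((hg x hx).trans_lt (EReal.coe_lt_coe_iff.2 hr))).frequently) ha hB bound

theorem le_exp_mul_of_upperDini_le {t0 c b K A : ℝ} {v : ℝ → ℝ}
    (hv_cont : ContinuousOn v (Ici t0))
    (hdini : ∀ t, t0 ≤ t →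
      upperDini v t ≤ ((-c * v t + K * Real.exp (-b * (t - t0)) : ℝ) : EReal))
    (hA0 : v t0 ≤ A) (hKA : K < (c - b) * A) {t : ℝ} (ht : t0 ≤ t) :
    v t ≤ Real.exp (-b * (t - t0)) * A := by
  have hB : ∀ x, HasDerivAt (fun x => Real.exp (-b * (x - t0)) * A)
      (-b * (Real.exp (-b * (x - t0)) * A)) x := fun x =>
    ((((hasDerivAt_id' x).sub_const t0).const_mul (-b)).exp.mul_const A).congr_deriv (by ring)
  refine le_of_upperDini_le_of_lt_deriv_boundary (hv_cont.mono Icc_subset_Ici_self)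
    (fun x hx => hdini x hx.1) (by simpa using hA0) hB (fun x _ hvx => ?_) ⟨ht, le_rfl⟩
  rw [hvx]
  have := mul_lt_mul_of_pos_left hKA (Real.exp_pos (-b * (x - t0)))
  linarith

theorem stmt_0_general (t0 c b K : ℝ) (hbc : b < c) (hK : 0 ≤ K)
    (v : ℝ → ℝ) (hv_cont : ContinuousOn v (Set.Ici t0)) (hv0 : 0 ≤ v t0)
    (hdini : ∀ t, t0 ≤ t →
      upperDini v t ≤ ((-c * v t + K * Real.exp (-b * (t - t0)) : ℝ) : EReal)) :
    ∀ t, t0 ≤ t → v t ≤ Real.exp (-b * (t - t0)) * (v t0 + K / (c - b)) := by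
  intro t ht
  have hcb : 0 < c - b := sub_pos.2 hbc
  have hexp := Real.exp_pos (-b * (t - t0))
  rw [← div_le_iff₀' hexp]
  refine le_of_forall_gt_imp_ge_of_dense fun A hA => ?_
  have hA0 : v t0 ≤ A := by linarith [div_nonneg hK hcb.le]
  have hKA : K < (c - b) * A := by
    have := (div_lt_iff₀' hcb).1 (lt_sub_iff_add_lt'.2 hA)
    nlinarith [mul_nonneg hcb.le hv0]
  rw [div_le_iff₀' hexp]
  exact le_exp_mul_of_upperDini_le hv_cont hdini hA0 hKA ht

theorem stmt_0 (t0 c b K : ℝ) (hc : 0 < c) (hb : 0 < b) (hbc : b < c) (hK : 0 ≤ K)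
    (v : ℝ → ℝ) (hv_cont : ContinuousOn v (Set.Ici t0)) (hv0 : 0 ≤ v t0)
    (hdini : ∀ t, t0 ≤ t →
      upperDini v t ≤ ((-c * v t + K * Real.exp (-b * (t - t0)) : ℝ) : EReal)) :
    ∀ t, t0 ≤ t → v t ≤ Real.exp (-b * (t - t0)) * (v t0 + K / (c - b)) :=
  stmt_0_general t0 c b K hbc hK v hv_cont hv0 hdini
end

section
/- Let n ∈ ℕ, t0 ∈ ℝ, let μ > σ ≥ 0, a > 0, b > 0 with b ≠ μ − σ, and set c = μ − σ and η = min{b, c}. Let α1 : [0,∞) → [0,∞) be of class K∞. Let L ≥ 0 and let χ : [0,∞) → [0,∞) satisfy χ(s) ≤ L·s for all s ∈ [0, a]. Let x : ℝ → ℝⁿ be continuous, let ε : ℝ → ℝⁿ, and let v : ℝ → ℝ be continuous on [t0,∞) satisfying, for all t ≥ t0: (i) α1(‖x(t)‖) ≤ v(t); (ii) D⁺v(t) ≤ −μ·v(t) + χ(‖ε(t)‖); and (iii) χ(‖ε(t)‖) ≤ σ·α1(‖x(t)‖) + χ(a·e^{−b(t−t0)}). Then, with M = v(t0) + a·L/|c−b|,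 one has α1(‖x(t)‖) ≤ M·e^{−η(t−t0)} for all t ≥ t0; consequently ‖x(t)‖ ≤ α1^{−1}(M) for all t ≥ t0 and ‖x(t)‖ → 0 as t → ∞. -/
/-- A function `α : [0,∞) → [0,∞)` of class `K∞`: continuous, strictly increasing,
`α(0) = 0`, nonnegative, and `α(s) → ∞` as `s → ∞`. -/
structure IsClassKInfty (α : ℝ → ℝ) : Prop where
  cont : ContinuousOn α (Set.Ici 0)
  strictMono : StrictMonoOn α (Set.Ici 0)
  zero : α 0 = 0
  nonneg : ∀ s, 0 ≤ s → 0 ≤ α s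
  tendsto_atTop : Filter.Tendsto α Filter.atTop Filter.atTop

/-!
Along the solution, (i)–(iii) give `D⁺v ≤ -(μ - σ) v + a L e^{-b(t - t0)}`. A comparison
principle for upper Dini derivatives bounds `v` by the exact solution of this linear equation,
which is at most `M e^{-η(t - t0)}`; since `α1 ‖x‖ ≤ v` and `α1` is of class `K∞`, the three
claims follow.
-/

open Filter Topology Set Real

theorem frequently_slope_lt_of_upperDini_lt {v : ℝ → ℝ} {t r : ℝ} (h : upperDini v t < r) :
    ∃ᶠ z in 𝓝[>] t, slope v t z < r := by
  have hshift : Tendsto (fun z => z - t) (𝓝[>] t) (𝓝[>] 0) := by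
    refine tendsto_nhdsWithin_of_tendsto_nhds_of_eventually_within _ ?_ ?_
    · simpa using (tendsto_id.sub_const t).mono_left (nhdsWithin_le_nhds (a := t) (s := Ioi t))
    · filter_upwards [self_mem_nhdsWithin] with z hz using sub_pos.2 (mem_Ioi.1 hz)
  refine ((hshift.eventually (eventually_lt_of_limsup_lt h)).mono fun z hz => ?_).frequently
  rw [slope_def_field]
  simpa using hz

theorem le_of_upperDini_le_linear {v u f : ℝ → ℝ} {c t0 : ℝ} (hv : ContinuousOn v (Ici t0))
    (hu : ∀ s, t0 ≤ s → HasDerivAt u (-c * u s + f s) s) (hvu : v t0 ≤ u t0)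
    (hD : ∀ s, t0 ≤ s → upperDini v s ≤ ((-c * v s + f s : ℝ) : EReal)) {t : ℝ} (ht : t0 ≤ t) :
    v t ≤ u t := by
  refine le_of_forall_pos_le_add fun δ hδ => ?_
  -- Fence `v` by `u + δ e^{(|c|+1)(s-t)}`: where `v` touches the fence, the growth rate `|c| + 1`
  -- beats the `-c v` term of the Dini bound.
  set l := |c| + 1
  have hw : ∀ s, t0 ≤ s → HasDerivAt (fun s => u s + δ * exp (l * (s - t)))
      (-c * u s + f s + δ * (exp (l * (s - t)) * l)) s := fun s hs =>
    (hu s hs).add ((((hasDerivAt_id s).sub_const t).const_mul l).exp.const_mul δ |>.congr_deriv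
      (by simp))
  have hfence := image_le_of_liminf_slope_right_lt_deriv_boundary' (hv.mono Icc_subset_Ici_self)
    (fun s hs r hr => frequently_slope_lt_of_upperDini_lt
      ((hD s hs.1).trans_lt (EReal.coe_lt_coe_iff.2 hr)))
    (by nlinarith [exp_pos (l * (t0 - t))])
    (fun s hs => (hw s hs.1).continuousAt.continuousWithinAt)
    (fun s hs => (hw s hs.1).hasDerivWithinAt)
    (fun s _ hvs => by
      rw [hvs]
      nlinarith [neg_abs_le c, mul_pos hδ (exp_pos (l * (s - t)))])
    ⟨ht, le_rfl⟩
  simpa using hfence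

noncomputable def forcedExpSolution (c b k u0 t0 s : ℝ) : ℝ :=
  u0 * exp (-c * (s - t0)) + k / (c - b) * (exp (-b * (s - t0)) - exp (-c * (s - t0)))

theorem hasDerivAt_exp_mul_sub (c t0 s : ℝ) :
    HasDerivAt (fun s => exp (-c * (s - t0))) (-c * exp (-c * (s - t0))) s := by
  simpa [mul_comm] using (((hasDerivAt_id s).sub_const t0).const_mul (-c)).exp

theorem hasDerivAt_forcedExpSolution {c b : ℝ} (hcb : c ≠ b) (k u0 t0 s : ℝ) :
    HasDerivAt (forcedExpSolution c b k u0 t0)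
      (-c * forcedExpSolution c b k u0 t0 s + k * exp (-b * (s - t0))) s := by
  have hcb' : c - b ≠ 0 := sub_ne_zero.2 hcb
  refine (((hasDerivAt_exp_mul_sub c t0 s).const_mul u0).add
    (((hasDerivAt_exp_mul_sub b t0 s).sub (hasDerivAt_exp_mul_sub c t0 s)).const_mul
      (k / (c - b)))).congr_deriv ?_
  simp only [forcedExpSolution]
  field_simp
  ring

@[simp]
theorem forcedExpSolution_self (c b k u0 t0 : ℝ) : forcedExpSolution c b k u0 t0 t0 = u0 := by
  simp [forcedExpSolution]

theorem forcedExpSolution_le {c b k u0 t0 t : ℝ} (hu0 : 0 ≤ u0) (hk : 0 ≤ k) (ht : t0 ≤ t) :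
    forcedExpSolution c b k u0 t0 t ≤ (u0 + k / |c - b|) * exp (-(min b c) * (t - t0)) := by
  have hτ : 0 ≤ t - t0 := sub_nonneg.2 ht
  have hb : exp (-b * (t - t0)) ≤ exp (-(min b c) * (t - t0)) :=
    exp_le_exp.2 (by nlinarith [min_le_left b c])
  have hc : exp (-c * (t - t0)) ≤ exp (-(min b c) * (t - t0)) :=
    exp_le_exp.2 (by nlinarith [min_le_right b c])
  have hdiff : |exp (-b * (t - t0)) - exp (-c * (t - t0))| ≤ exp (-(min b c) * (t - t0)) :=
    abs_sub_le_iff.2 ⟨by linarith [exp_pos (-c * (t - t0))], by linarith [exp_pos (-b * (t - t0))]⟩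
  calc forcedExpSolution c b k u0 t0 t
      ≤ u0 * exp (-c * (t - t0)) + |k / (c - b) * (exp (-b * (t - t0)) - exp (-c * (t - t0)))| :=
        add_le_add le_rfl (le_abs_self _)
    _ = u0 * exp (-c * (t - t0)) + k / |c - b| * |exp (-b * (t - t0)) - exp (-c * (t - t0))| := by
        rw [abs_mul, abs_div, abs_of_nonneg hk]
    _ ≤ (u0 + k / |c - b|) * exp (-(min b c) * (t - t0)) := by
        rw [add_mul]
        gcongr

theorem tendsto_mul_exp_neg_mul_sub {η : ℝ} (hη : 0 < η) (M t0 : ℝ) :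
    Tendsto (fun t => M * exp (-η * (t - t0))) atTop (𝓝 0) := by
  have hlin : Tendsto (fun t => -η * (t + -t0)) atTop atBot :=
    (tendsto_atTop_add_const_right _ (-t0) tendsto_id).const_mul_atTop_of_neg (neg_lt_zero.2 hη)
  simpa [sub_eq_add_neg] using (tendsto_exp_atBot.comp hlin).const_mul M

theorem StrictMonoOn.tendsto_nhds_zero_of_le {ι : Type*} {l : Filter ι} {α : ℝ → ℝ}
    (hα : StrictMonoOn α (Ici 0)) (hα0 : α 0 = 0) {f g : ι → ℝ} (hf : ∀ i, 0 ≤ f i)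
    (hfg : ∀ᶠ i in l, α (f i) ≤ g i) (hg : Tendsto g l (𝓝 0)) : Tendsto f l (𝓝 0) := by
  refine tendsto_order.2 ⟨fun q hq => .of_forall fun i => hq.trans_le (hf i), fun δ hδ => ?_⟩
  have hαδ : 0 < α δ := hα0 ▸ hα self_mem_Ici hδ.le hδ
  filter_upwards [hfg, hg.eventually_lt_const hαδ] with i hle hlt
  exact (hα.lt_iff_lt (hf i) hδ.le).1 (hle.trans_lt hlt)

theorem stmt_9_general (n : ℕ) (t0 μ σ a b L : ℝ)
    (hσ : 0 ≤ σ) (hμσ : σ < μ) (ha : 0 < a) (hb : 0 < b) (hbc : b ≠ μ - σ) (hL : 0 ≤ L)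
    (α1 : ℝ → ℝ) (hα1 : IsClassKInfty α1)
    (α1inv : ℝ → ℝ) (hα1inv : ∀ s, 0 ≤ s → α1inv (α1 s) = s)
    (hα1inv_mono : MonotoneOn α1inv (Set.Ici 0))
    (χ : ℝ → ℝ)
    (hχ_lin : ∀ s ∈ Set.Icc 0 a, χ s ≤ L * s)
    (x : ℝ → EuclideanSpace ℝ (Fin n))
    (ε : ℝ → EuclideanSpace ℝ (Fin n))
    (v : ℝ → ℝ) (hv_cont : ContinuousOn v (Set.Ici t0))
    (h1 : ∀ t, t0 ≤ t → α1 ‖x t‖ ≤ v t)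
    (h2 : ∀ t, t0 ≤ t → upperDini v t ≤ ((-μ * v t + χ ‖ε t‖ : ℝ) : EReal))
    (h3 : ∀ t, t0 ≤ t →
      χ ‖ε t‖ ≤ σ * α1 ‖x t‖ + χ (a * Real.exp (-b * (t - t0)))) :
    (∀ t, t0 ≤ t → α1 ‖x t‖ ≤
        (v t0 + a * L / |(μ - σ) - b|) *
          Real.exp (-(min b (μ - σ)) * (t - t0))) ∧
    (∀ t, t0 ≤ t → ‖x t‖ ≤ α1inv (v t0 + a * L / |(μ - σ) - b|)) ∧
    Filter.Tendsto (fun t => ‖x t‖) Filter.atTop (nhds 0) := by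
  set c := μ - σ
  set M := v t0 + a * L / |c - b|
  have hα1x : ∀ t, 0 ≤ α1 ‖x t‖ := fun t => hα1.nonneg _ (norm_nonneg _)
  have hv0 : 0 ≤ v t0 := (hα1x t0).trans (h1 t0 le_rfl)
  have hD : ∀ s, t0 ≤ s →
      upperDini v s ≤ ((-c * v s + a * L * exp (-b * (s - t0)) : ℝ) : EReal) := by
    intro s hs
    have hexp : a * exp (-b * (s - t0)) ∈ Icc 0 a :=
      ⟨by positivity, mul_le_of_le_one_right ha.le (exp_le_one_iff.2 (by nlinarith))⟩
    refine (h2 s hs).trans (EReal.coe_le_coe_iff.2 ?_)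
    nlinarith [h3 s hs, hχ_lin _ hexp, h1 s hs, hα1x s]
  have hdecay : ∀ t, t0 ≤ t → α1 ‖x t‖ ≤ M * exp (-(min b c) * (t - t0)) := fun t ht =>
    (h1 t ht).trans <| (le_of_upperDini_le_linear hv_cont
      (fun s _ => hasDerivAt_forcedExpSolution hbc.symm _ _ _ s)
      (forcedExpSolution_self ..).ge hD ht).trans
      (forcedExpSolution_le hv0 (by positivity) ht)
  have hM : 0 ≤ M := by positivity
  have hη : 0 < min b c := lt_min hb (sub_pos.2 hμσ)
  refine ⟨hdecay, fun t ht => ?_, ?_⟩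
  · have hle : α1 ‖x t‖ ≤ M :=
      (hdecay t ht).trans (mul_le_of_le_one_right hM (exp_le_one_iff.2 (by nlinarith)))
    calc ‖x t‖ = α1inv (α1 ‖x t‖) := (hα1inv _ (norm_nonneg _)).symm
      _ ≤ α1inv M := hα1inv_mono (hα1x t) hM hle
  · exact hα1.strictMono.tendsto_nhds_zero_of_le hα1.zero (fun t => norm_nonneg _)
      ((eventually_ge_atTop t0).mono hdecay) (tendsto_mul_exp_neg_mul_sub hη M t0)

theorem stmt_9 (n : ℕ) (t0 μ σ a b L : ℝ)
    (hσ : 0 ≤ σ) (hμσ : σ < μ) (ha : 0 < a) (hb : 0 < b) (hbc : b ≠ μ - σ) (hL : 0 ≤ L)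
    (α1 : ℝ → ℝ) (hα1 : IsClassKInfty α1)
    (α1inv : ℝ → ℝ) (hα1inv : ∀ s, 0 ≤ s → α1inv (α1 s) = s)
    (hα1inv_mono : MonotoneOn α1inv (Set.Ici 0))
    (χ : ℝ → ℝ) (hχ_nonneg : ∀ s, 0 ≤ s → 0 ≤ χ s)
    (hχ_lin : ∀ s ∈ Set.Icc 0 a, χ s ≤ L * s)
    (x : ℝ → EuclideanSpace ℝ (Fin n)) (hx_cont : Continuous x)
    (ε : ℝ → EuclideanSpace ℝ (Fin n))
    (v : ℝ → ℝ) (hv_cont : ContinuousOn v (Set.Ici t0))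
    (h1 : ∀ t, t0 ≤ t → α1 ‖x t‖ ≤ v t)
    (h2 : ∀ t, t0 ≤ t → upperDini v t ≤ ((-μ * v t + χ ‖ε t‖ : ℝ) : EReal))
    (h3 : ∀ t, t0 ≤ t →
      χ ‖ε t‖ ≤ σ * α1 ‖x t‖ + χ (a * Real.exp (-b * (t - t0)))) :
    (∀ t, t0 ≤ t → α1 ‖x t‖ ≤
        (v t0 + a * L / |(μ - σ) - b|) *
          Real.exp (-(min b (μ - σ)) * (t - t0))) ∧
    (∀ t, t0 ≤ t → ‖x t‖ ≤ α1inv (v t0 + a * L / |(μ - σ) - b|)) ∧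
    Filter.Tendsto (fun t => ‖x t‖) Filter.atTop (nhds 0) :=
  stmt_9_general n t0 μ σ a b L hσ hμσ ha hb hbc hL α1 hα1 α1inv hα1inv hα1inv_mono χ hχ_lin x ε v
    hv_cont h1 h2 h3
end

section
/- Let n ∈ ℕ, τ ≥ 0, η > 0, C ≥ 0, L2 ≥ 0, L3 ≥ 0, and let t0 ≤ t_i ≤ t be real numbers. Let x : ℝ → ℝⁿ be continuous and differentiable on [t_i, t], and suppose: (i) ‖x'(s)‖ ≤ L2·sup_{u∈[s−τ, s]} ‖x(u)‖ + L3·‖x(t_i)‖ for all s ∈ [t_i, t]; and (ii) ‖x(u)‖ ≤ C·e^{−η(u−t0)} for all u ≥ t0 − τ. Then ‖x(t_i) − x(t)‖ ≤ λ1·(e^{−η(t_i−t0)} − e^{−η(t−t0)}) + λ2·(t − t_i)·e^{−η(t_i−t0)}, where λ1 = L2·C·e^{ητ}/η and λ2 = L3·C. -/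
/-! Between two events the error `x tᵢ - x t` is the integral of `x'`. By (i) and the exponential
decay (ii), `‖x' s‖` is at most `L2 C e^{ητ} e^{-η(s-t0)} + L3 C e^{-η(tᵢ-t0)}`, and the claimed
bound is the primitive of this majorant vanishing at `tᵢ`, so a mean value (fencing) argument
gives the estimate. -/

open Real Set

theorem norm_sub_le_sub_of_norm_deriv_le {E : Type*} [NormedAddCommGroup E] [NormedSpace ℝ E]
    {f f' : ℝ → E} {B B' : ℝ → ℝ} {a b : ℝ} (hab : a ≤ b)
    (hf : ∀ s ∈ Icc a b, HasDerivAt f (f' s) s) (hB : ∀ s, HasDerivAt B (B' s) s)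
    (bound : ∀ s ∈ Ico a b, ‖f' s‖ ≤ B' s) :
    ‖f b - f a‖ ≤ B b - B a := by
  have hcont : ContinuousOn (fun s => f s - f a) (Icc a b) :=
    (HasDerivAt.continuousOn hf).sub continuousOn_const
  refine image_norm_le_of_norm_deriv_right_le_deriv_boundary (B := fun s => B s - B a) hcont
    (fun s hs => ((hf s (Ico_subset_Icc_self hs)).sub_const (f a)).hasDerivWithinAt)
    (by simp) (fun s => (hB s).sub_const (B a)) bound (right_mem_Icc.2 hab)

theorem hasDerivAt_exp_neg_mul_sub (η t0 s : ℝ) :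
    HasDerivAt (fun s => exp (-η * (s - t0))) (-η * exp (-η * (s - t0))) s := by
  simpa [mul_comm] using ((hasDerivAt_id s).sub_const t0).const_mul (-η) |>.exp

theorem hasDerivAt_exp_decay_primitive {η : ℝ} (hη : η ≠ 0) (c d ti t0 s : ℝ) :
    HasDerivAt
      (fun s => c / η * (exp (-η * (ti - t0)) - exp (-η * (s - t0))) +
        d * (s - ti) * exp (-η * (ti - t0)))
      (c * exp (-η * (s - t0)) + d * exp (-η * (ti - t0))) s := by
  have h := ((hasDerivAt_exp_neg_mul_sub η t0 s).const_sub (exp (-η * (ti - t0)))).const_mul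
    (c / η) |>.add ((((hasDerivAt_id s).sub_const ti).const_mul d).mul_const
      (exp (-η * (ti - t0))))
  refine h.congr_deriv ?_
  field_simp

theorem sSup_norm_image_Icc_le_of_exp_decay {E : Type*} [NormedAddCommGroup E]
    {x : ℝ → E} {τ η C t0 s : ℝ} (hη : 0 ≤ η) (hC : 0 ≤ C) (hs : t0 ≤ s)
    (hdecay : ∀ u, t0 - τ ≤ u → ‖x u‖ ≤ C * exp (-η * (u - t0))) :
    sSup ((fun u => ‖x u‖) '' Icc (s - τ) s) ≤ C * exp (η * τ) * exp (-η * (s - t0)) := by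
  refine Real.sSup_le ?_ (by positivity)
  rintro _ ⟨u, hu, rfl⟩
  calc ‖x u‖ ≤ C * exp (-η * (u - t0)) := hdecay u (by linarith [hu.1])
    _ ≤ C * exp (η * τ + -η * (s - t0)) := by gcongr; nlinarith [hu.1]
    _ = C * exp (η * τ) * exp (-η * (s - t0)) := by rw [exp_add, mul_assoc]

theorem stmt_11_general (n : ℕ) (τ η C L2 L3 t0 ti t : ℝ)
    (hτ : 0 ≤ τ) (hη : 0 < η) (hC : 0 ≤ C) (hL2 : 0 ≤ L2) (hL3 : 0 ≤ L3)
    (ht0i : t0 ≤ ti) (hit : ti ≤ t)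
    (x : ℝ → EuclideanSpace ℝ (Fin n))
    (x' : ℝ → EuclideanSpace ℝ (Fin n))
    (hderiv : ∀ s ∈ Set.Icc ti t, HasDerivAt x (x' s) s)
    (hbound : ∀ s ∈ Set.Icc ti t,
      ‖x' s‖ ≤ L2 * sSup ((fun u => ‖x u‖) '' Set.Icc (s - τ) s) + L3 * ‖x ti‖)
    (hdecay : ∀ u, t0 - τ ≤ u → ‖x u‖ ≤ C * Real.exp (-η * (u - t0))) :
    ‖x ti - x t‖ ≤
      (L2 * C * Real.exp (η * τ) / η) *
          (Real.exp (-η * (ti - t0)) - Real.exp (-η * (t - t0))) +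
        (L3 * C) * (t - ti) * Real.exp (-η * (ti - t0)) := by
  have hxti : ‖x ti‖ ≤ C * exp (-η * (ti - t0)) := hdecay ti (by linarith)
  have hx' : ∀ s ∈ Ico ti t,
      ‖x' s‖ ≤ L2 * C * exp (η * τ) * exp (-η * (s - t0)) + L3 * C * exp (-η * (ti - t0)) := by
    intro s hs
    calc ‖x' s‖ ≤ L2 * sSup ((fun u => ‖x u‖) '' Icc (s - τ) s) + L3 * ‖x ti‖ :=
          hbound s (Ico_subset_Icc_self hs)
      _ ≤ L2 * (C * exp (η * τ) * exp (-η * (s - t0))) + L3 * (C * exp (-η * (ti - t0))) := by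
          gcongr
          exact sSup_norm_image_Icc_le_of_exp_decay hη.le hC (by linarith [hs.1]) hdecay
      _ = _ := by ring
  have h := norm_sub_le_sub_of_norm_deriv_le hit hderiv
    (hasDerivAt_exp_decay_primitive hη.ne' (L2 * C * exp (η * τ)) (L3 * C) ti t0) hx'
  rw [norm_sub_rev]
  simpa using h

theorem stmt_11 (n : ℕ) (τ η C L2 L3 t0 ti t : ℝ)
    (hτ : 0 ≤ τ) (hη : 0 < η) (hC : 0 ≤ C) (hL2 : 0 ≤ L2) (hL3 : 0 ≤ L3)
    (ht0i : t0 ≤ ti) (hit : ti ≤ t)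
    (x : ℝ → EuclideanSpace ℝ (Fin n)) (hx_cont : Continuous x)
    (x' : ℝ → EuclideanSpace ℝ (Fin n))
    (hderiv : ∀ s ∈ Set.Icc ti t, HasDerivAt x (x' s) s)
    (hbound : ∀ s ∈ Set.Icc ti t,
      ‖x' s‖ ≤ L2 * sSup ((fun u => ‖x u‖) '' Set.Icc (s - τ) s) + L3 * ‖x ti‖)
    (hdecay : ∀ u, t0 - τ ≤ u → ‖x u‖ ≤ C * Real.exp (-η * (u - t0))) :
    ‖x ti - x t‖ ≤
      (L2 * C * Real.exp (η * τ) / η) *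
          (Real.exp (-η * (ti - t0)) - Real.exp (-η * (t - t0))) +
        (L3 * C) * (t - ti) * Real.exp (-η * (ti - t0)) :=
  stmt_11_general n τ η C L2 L3 t0 ti t hτ hη hC hL2 hL3 ht0i hit x x' hderiv hbound hdecay
end

section
/- Let r > 0 and 0 < q1 < q2, and let x : ℝ → ℝ be continuous. Define v2 : ℝ → ℝ by v2(t) = ∫_{t−r}^{t} |x(s)| · ( ((t−s)/r)·q1 + ((s−t+r)/r)·q2 ) ds. Then for every t, v2'(t) ≤ −((q2−q1)/(r·q2)) · v2(t) + q2·|x(t)| − q1·|x(t−r)|. -/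
/-!
Since the weight is affine in `s`, `v2 t = q2 * A t - k * B t` with `k = (q2 - q1) / r`,
`A t = ∫_{t-r}^t |x|` and `B t = ∫_{t-r}^t (t - s) |x s| ds ≥ 0`. Differentiating the two window
integrals gives `v2' t = q2 |x t| - q1 |x (t - r)| - k A t`, and `-k A t ≤ -(k / q2) v2 t`
because the difference is `k² B t / q2 ≥ 0`.
-/

open intervalIntegral
open MeasureTheory (volume)

section WindowIntegral

variable {g : ℝ → ℝ}

theorem Continuous.hasDerivAt_integral_window (hg : Continuous g) (r t : ℝ) :
    HasDerivAt (fun u => ∫ s in (u - r)..u, g s) (g t - g (t - r)) t := by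
  have hF (u : ℝ) : HasDerivAt (fun u => ∫ s in (0 : ℝ)..u, g s) (g u) u :=
    (hg.integral_hasStrictDerivAt 0 u).hasDerivAt
  have hshift : HasDerivAt (fun u => ∫ s in (0 : ℝ)..(u - r), g s) (g (t - r)) t :=
    (hF (t - r)).comp_sub_const t r
  refine ((hF t).sub hshift).congr_of_eventuallyEq (Filter.Eventually.of_forall fun u => ?_)
  exact (integral_interval_sub_left (hg.intervalIntegrable _ _) (hg.intervalIntegrable _ _)).symm

theorem Continuous.integral_window_sub_mul (hg : Continuous g) (r t : ℝ) :
    ∫ s in (t - r)..t, (t - s) * g s =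
      t * (∫ s in (t - r)..t, g s) - ∫ s in (t - r)..t, s * g s := by
  have htg : IntervalIntegrable (fun s => t * g s) volume (t - r) t :=
    (continuous_const.mul hg).intervalIntegrable _ _
  have hsg : IntervalIntegrable (fun s => s * g s) volume (t - r) t :=
    (continuous_id.mul hg).intervalIntegrable _ _
  simp only [sub_mul]
  rw [integral_sub htg hsg, integral_const_mul]

theorem Continuous.hasDerivAt_integral_window_sub_mul (hg : Continuous g) (r t : ℝ) :
    HasDerivAt (fun u => ∫ s in (u - r)..u, (u - s) * g s)
      ((∫ s in (t - r)..t, g s) - r * g (t - r)) t := by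
  have hsg : Continuous fun s => s * g s := continuous_id.mul hg
  have hD := ((hasDerivAt_id' t).fun_mul (hg.hasDerivAt_integral_window r t)).fun_sub
    (hsg.hasDerivAt_integral_window r t)
  rw [funext (hg.integral_window_sub_mul r)]
  exact hD.congr_deriv (by ring)

theorem integral_window_sub_mul_nonneg {r : ℝ} (hr : 0 ≤ r) (hg : ∀ s, 0 ≤ g s) (t : ℝ) :
    0 ≤ ∫ s in (t - r)..t, (t - s) * g s :=
  integral_nonneg (by linarith) fun s hs => mul_nonneg (by linarith [hs.2]) (hg s)

theorem Continuous.integral_window_affine_weight (hg : Continuous g) {r : ℝ}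
    (hr : r ≠ 0) (q1 q2 t : ℝ) :
    ∫ s in (t - r)..t, g s * (((t - s) / r) * q1 + ((s - t + r) / r) * q2) =
      q2 * (∫ s in (t - r)..t, g s) - (q2 - q1) / r * ∫ s in (t - r)..t, (t - s) * g s := by
  have hweight (s : ℝ) : g s * (((t - s) / r) * q1 + ((s - t + r) / r) * q2) =
      q2 * g s - (q2 - q1) / r * ((t - s) * g s) := by
    field_simp
    ring
  have hA : IntervalIntegrable (fun s => q2 * g s) volume (t - r) t :=
    (continuous_const.mul hg).intervalIntegrable _ _
  have hB : IntervalIntegrable (fun s => (q2 - q1) / r * ((t - s) * g s))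
      volume (t - r) t :=
    Continuous.intervalIntegrable (by fun_prop) _ _
  simp only [hweight]
  rw [integral_sub hA hB, integral_const_mul, integral_const_mul]

end WindowIntegral

theorem stmt_13 (r q1 q2 : ℝ) (hr : 0 < r) (hq1 : 0 < q1) (hq12 : q1 < q2)
    (x : ℝ → ℝ) (hx_cont : Continuous x) (v2 : ℝ → ℝ)
    (hv2 : ∀ t, v2 t =
      ∫ s in (t - r)..t, |x s| * (((t - s) / r) * q1 + ((s - t + r) / r) * q2)) :
    ∀ t, deriv v2 t ≤
      -((q2 - q1) / (r * q2)) * v2 t + q2 * |x t| - q1 * |x (t - r)| := by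
  intro t
  have habs := hx_cont.abs
  set A := fun u => ∫ s in (u - r)..u, |x s|
  set B := fun u => ∫ s in (u - r)..u, (u - s) * |x s|
  have hv2_eq : v2 = fun u => q2 * A u - (q2 - q1) / r * B u :=
    funext fun u => (hv2 u).trans (habs.integral_window_affine_weight hr.ne' q1 q2 u)
  have hv2_deriv : HasDerivAt v2 (q2 * (|x t| - |x (t - r)|)
      - (q2 - q1) / r * (A t - r * |x (t - r)|)) t := by
    rw [hv2_eq]
    exact ((habs.hasDerivAt_integral_window r t).const_mul q2).sub
      ((habs.hasDerivAt_integral_window_sub_mul r t).const_mul _)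
  have hderiv : deriv v2 t = q2 * |x t| - q1 * |x (t - r)| - (q2 - q1) / r * A t := by
    rw [hv2_deriv.deriv]
    field_simp
    ring
  have hB : 0 ≤ B t := integral_window_sub_mul_nonneg hr.le (fun s => abs_nonneg (x s)) t
  have hq2 : 0 < q2 := hq1.trans hq12
  have hgap : 0 ≤ ((q2 - q1) / r) ^ 2 * B t / q2 := by positivity
  have hsplit : -((q2 - q1) / (r * q2)) * (q2 * A t - (q2 - q1) / r * B t) =
      -((q2 - q1) / r * A t) + ((q2 - q1) / r) ^ 2 * B t / q2 := by
    field_simp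
    ring
  rw [hderiv, congrFun hv2_eq t]
  linarith
end
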